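/- arXiv:2109.06019 — 4 statements merged into one kernel-verified Lean document; each statement's English description precedes it below -/
import Mathlib

section
/- The number of cyclic-interval partitions of {1,...,n} is 2^n - n, for n ≥ 1. -/
attribute [local instance] Classical.propDecidable

instance {α : Type*} [Finite α] : Finite (Setoid α) :=
  Finite.of_injective (fun s : Setoid α => s.r)
    (fun a b h => Setoid.ext fun x y => by rw [show a.r = b.r from h])

noncomputable instance {α : Type*} [Finite α] : Fintype (Setoid α) :=
  Fintype.ofFinite _

/-- A set partition of `{0,...,n-1}` (encoded as a `Setoid (Fin n)`) is an *interval
partition* iff each of its blocks consists of consecutive integers. -/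
def IsIntervalSetoid {n : ℕ} (s : Setoid (Fin n)) : Prop :=
  ∀ a b c : Fin n, a ≤ b → b ≤ c → s.r a c → s.r a b

/-- A set partition is *non-crossing* iff there are no `a < b < c < d` with `a, c` in one
block and `b, d` in a different block. -/
def IsNoncrossing {n : ℕ} (s : Setoid (Fin n)) : Prop :=
  ∀ a b c d : Fin n, a < b → b < c → c < d → s.r a c → s.r b d → s.r a b

/-- A subset of `Fin n` is a *cyclic interval* iff it consists of cyclically consecutive
residues mod `n`. -/
def IsCyclicInterval {n : ℕ} (B : Set (Fin n)) : Prop :=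
  ∃ (b : Fin n) (k : ℕ), B = {x | ∃ i ≤ k, x = ((finRotate n) ^ i) b}

/-- A set partition of `Fin n` is a *cyclic-interval partition* iff all of its blocks are
cyclic intervals. -/
def IsCyclicIntervalSetoid {n : ℕ} (s : Setoid (Fin n)) : Prop :=
  ∀ a : Fin n, IsCyclicInterval {x | s.r a x}

/-- The singleton-insertion map `Ψ^n_r` : it inserts a singleton block at position `r`,
shifting the rest of the partition. -/
def insertSingleton {n : ℕ} (r : Fin (n + 1)) (s : Setoid (Fin n)) : Setoid (Fin (n + 1)) where
  r a b := (a = r ∧ b = r) ∨ ∃ i j : Fin n, a = r.succAbove i ∧ b = r.succAbove j ∧ s.r i j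
  iseqv := by
    constructor
    · intro a
      rcases eq_or_ne a r with h | h
      · exact Or.inl ⟨h, h⟩
      · obtain ⟨i, hi⟩ := Fin.exists_succAbove_eq h
        exact Or.inr ⟨i, i, hi.symm, hi.symm, s.refl i⟩
    · rintro a b (⟨h1, h2⟩ | ⟨i, j, h1, h2, h3⟩)
      · exact Or.inl ⟨h2, h1⟩
      · exact Or.inr ⟨j, i, h2, h1, s.symm h3⟩
    · rintro a b c (⟨h1, h2⟩ | ⟨i, j, h1, h2, h3⟩) (⟨g1, g2⟩ | ⟨k, l, g1, g2, g3⟩)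
      · exact Or.inl ⟨h1, g2⟩
      · exact absurd (g1.symm.trans h2) (Fin.succAbove_ne r k)
      · exact absurd (h2.symm.trans g1) (Fin.succAbove_ne r j)
      · have hjk : j = k := Fin.succAbove_right_injective (h2.symm.trans g1)
        exact Or.inr ⟨i, l, h1, g2, s.trans h3 (hjk ▸ g3)⟩

/-- The elements of `Fin n` that do NOT form singleton blocks of `s`. -/
noncomputable def nonSingletons {n : ℕ} (s : Setoid (Fin n)) : Finset (Fin n) :=
  Finset.univ.filter fun x => ∃ y, y ≠ x ∧ s.r x y

/-- `RS s` removes all singleton blocks of the partition `s` and relabels the remaining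
elements in an order-preserving way. -/
noncomputable def RS {n : ℕ} (s : Setoid (Fin n)) : Setoid (Fin (nonSingletons s).card) where
  r i j := s.r ((nonSingletons s).orderIsoOfFin rfl i).1 ((nonSingletons s).orderIsoOfFin rfl j).1
  iseqv := ⟨fun i => s.refl _, fun h => s.symm h, fun h h' => s.trans h h'⟩

/-- An *almost-interval* partition: non-crossing, and removing the singleton blocks yields
an interval partition. -/
def IsAlmostInterval {n : ℕ} (s : Setoid (Fin n)) : Prop :=
  IsNoncrossing s ∧ IsIntervalSetoid (RS s)

/-- A *cyclic almost-interval* partition: non-crossing, and removing the singleton blocks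
yields a cyclic-interval partition. -/
def IsAlmostCyclicInterval {n : ℕ} (s : Setoid (Fin n)) : Prop :=
  IsNoncrossing s ∧ IsCyclicIntervalSetoid (RS s)

/-- The number of crossings of a set partition: the number of quadruples `a < b < c < d`
with `a ~ c`, `b ~ d` lying in two different blocks. -/
noncomputable def crossNum {n : ℕ} (s : Setoid (Fin n)) : ℕ :=
  Finset.card (Finset.univ.filter fun p : Fin n × Fin n × Fin n × Fin n =>
    p.1 < p.2.1 ∧ p.2.1 < p.2.2.1 ∧ p.2.2.1 < p.2.2.2 ∧
      s.r p.1 p.2.2.1 ∧ s.r p.2.1 p.2.2.2 ∧ ¬ s.r p.1 p.2.1)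

/-- `{r}` is a singleton block of the partition `s`. -/
def IsSingletonBlock {n : ℕ} (r : Fin n) (s : Setoid (Fin n)) : Prop :=
  ∀ y, s.r r y → y = r

/-- The partition `{{1,2},{3},...,{n}}` (in `Fin n` indexing: block `{0,1}`, rest singletons). -/
def pairBlockFirst (n : ℕ) : Setoid (Fin n) where
  r x y := x = y ∨ ((x : ℕ) < 2 ∧ (y : ℕ) < 2)
  iseqv := by
    refine ⟨fun x => Or.inl rfl, ?_, ?_⟩
    · rintro x y (rfl | h)
      · exact Or.inl rfl
      · exact Or.inr ⟨h.2, h.1⟩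
    · rintro x y z (rfl | h) h'
      · exact h'
      · rcases h' with rfl | h'
        · exact Or.inr h
        · exact Or.inr ⟨h.1, h'.2⟩

/-- The partition of `Fin n` whose blocks are the singleton `{k}` and its complement. -/
def singletonAt {n : ℕ} (k : Fin n) : Setoid (Fin n) where
  r x y := x = y ∨ (x ≠ k ∧ y ≠ k)
  iseqv := by
    refine ⟨fun x => Or.inl rfl, ?_, ?_⟩
    · rintro x y (rfl | h)
      · exact Or.inl rfl
      · exact Or.inr ⟨h.2, h.1⟩
    · rintro x y z (rfl | h) h'
      · exact h'
      · rcases h' with rfl | h'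
        · exact Or.inr h
        · exact Or.inr ⟨h.1, h'.2⟩

/-- The order embedding `Fin (n - m) → Fin n` that skips the `m` positions `j, ..., j+m-1`. -/
def skipEmb {n : ℕ} (m j : ℕ) (h : j + m ≤ n) (i : Fin (n - m)) : Fin n :=
  ⟨if (i : ℕ) < j then (i : ℕ) else (i : ℕ) + m, by have := i.isLt; split <;> omega⟩

/-!
A partition of the `n`-cycle is determined by its *cuts*, the points `x` such that `x - 1` and
`x` lie in different blocks. A single cut separates nothing on a circle, so no partition has
exactly one cut; conversely, any set of points other than a singleton cuts the circle into arcs,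
and these arcs form the unique cyclic-interval partition with that set of cuts. Hence the
cyclic-interval partitions correspond to the `2 ^ n - n` subsets of size different from one.
-/

theorem card_finset_card_ne_one (α : Type*) [Fintype α] :
    Fintype.card {A : Finset α // A.card ≠ 1} = 2 ^ Fintype.card α - Fintype.card α := by
  rw [Fintype.card_subtype_compl, Fintype.card_finset, Fintype.card_subtype,
    ← Finset.powerset_univ, ← Finset.powersetCard_eq_filter, Finset.card_powersetCard,
    Finset.card_univ, Nat.choose_one_right]

theorem Finset.two_le_card_of_card_ne_one {α : Type*} {A : Finset α} (h1 : A.card ≠ 1)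
    (hA : A.Nonempty) : 2 ≤ A.card := by
  have := hA.card_pos
  omega

namespace CyclicIntervalPartition

open Fin.CommRing

variable {n : ℕ} [NeZero n]

theorem finRotate_pow_apply (i : ℕ) (b : Fin n) : (finRotate n ^ i) b = b + i := by
  induction i generalizing b with
  | zero => simp
  | succ i ih => rw [pow_succ, Equiv.Perm.mul_apply, finRotate_apply, ih]; push_cast; ring

theorem isCyclicInterval_iff {B : Set (Fin n)} :
    IsCyclicInterval B ↔ ∃ (b : Fin n) (k : ℕ), B = {x | ∃ i ≤ k, x = b + i} := by
  simp only [IsCyclicInterval, finRotate_pow_apply]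

theorem natCast_ne_zero_of_lt {a : ℕ} (h0 : 0 < a) (h : a < n) : (a : Fin n) ≠ 0 := by
  rw [Ne, Fin.natCast_eq_zero]
  exact fun hdvd => (Nat.le_of_dvd h0 hdvd).not_gt h

theorem sub_one_sub_natCast (x : Fin n) (l : ℕ) : x - 1 - l = x - ((l + 1 : ℕ) : Fin n) := by
  push_cast; ring

theorem val_neg_one : (-1 : Fin n).val = n - 1 := by
  obtain ⟨m, rfl⟩ := Nat.exists_eq_succ_of_ne_zero (NeZero.ne n)
  exact Fin.coe_neg_one

section Cuts

variable {s : Setoid (Fin n)}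

noncomputable def cuts (s : Setoid (Fin n)) : Finset (Fin n) :=
  Finset.univ.filter fun x => ¬ s.r x (x - 1)

theorem mem_cuts {x : Fin n} : x ∈ cuts s ↔ ¬ s.r x (x - 1) := by
  simp [cuts]

theorem rel_sub_natCast {x : Fin n} {i : ℕ} (h : ∀ l < i, x - l ∉ cuts s) : s.r x (x - i) := by
  induction i with
  | zero => simpa only [Nat.cast_zero, sub_zero] using s.refl x
  | succ i ih =>
    have step : s.r (x - i) (x - i - 1) := not_not.mp (mem_cuts.not.mp (h i (by omega)))
    rw [sub_right_comm, sub_one_sub_natCast] at step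
    exact s.trans (ih fun l hl => h l (by omega)) step

theorem card_cuts_ne_one (s : Setoid (Fin n)) : (cuts s).card ≠ 1 := by
  intro h
  obtain ⟨a, ha⟩ := Finset.card_eq_one.mp h
  have hchain : s.r (a - 1) (a - 1 - ((n - 1 : ℕ) : Fin n)) := by
    refine rel_sub_natCast fun l hl hmem => ?_
    rw [ha, Finset.mem_singleton, sub_one_sub_natCast, sub_eq_self] at hmem
    exact natCast_ne_zero_of_lt (by omega) (by omega) hmem
  have hback : a - 1 - ((n - 1 : ℕ) : Fin n) = a := by
    rw [sub_one_sub_natCast, Nat.sub_add_cancel NeZero.one_le, Fin.natCast_self, sub_zero]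
  rw [hback] at hchain
  exact mem_cuts.mp (ha ▸ Finset.mem_singleton_self a) (s.symm hchain)

end Cuts

section PrevCut

variable {A : Finset (Fin n)}

theorem exists_sub_natCast_mem (hA : A.Nonempty) (x : Fin n) : ∃ i : ℕ, x - i ∈ A :=
  let ⟨a, ha⟩ := hA
  ⟨(x - a).val, by simpa using ha⟩

noncomputable def cutDist (hA : A.Nonempty) (x : Fin n) : ℕ :=
  Nat.find (exists_sub_natCast_mem hA x)

/-- The first point of `A` met when walking backwards from `x` (so `x` itself if `x ∈ A`). -/
noncomputable def prevCut (hA : A.Nonempty) (x : Fin n) : Fin n :=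
  x - cutDist hA x

variable {hA : A.Nonempty}

theorem prevCut_mem (x : Fin n) : prevCut hA x ∈ A :=
  Nat.find_spec (exists_sub_natCast_mem hA x)

theorem sub_natCast_notMem_of_lt_cutDist {x : Fin n} {l : ℕ} (hl : l < cutDist hA x) :
    x - l ∉ A :=
  Nat.find_min (exists_sub_natCast_mem hA x) hl

theorem cutDist_le {x : Fin n} {i : ℕ} (h : x - i ∈ A) : cutDist hA x ≤ i :=
  Nat.find_le h

theorem cutDist_eq {x : Fin n} {i : ℕ} (hi : x - i ∈ A) (hmin : ∀ l < i, x - l ∉ A) :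
    cutDist hA x = i :=
  (Nat.find_eq_iff _).mpr ⟨hi, hmin⟩

theorem cutDist_lt (x : Fin n) : cutDist hA x < n :=
  let ⟨a, ha⟩ := hA
  (cutDist_le (i := (x - a).val) (by simpa using ha)).trans_lt (x - a).isLt

theorem val_sub_prevCut (x : Fin n) : (x - prevCut hA x).val = cutDist hA x := by
  rw [prevCut, sub_sub_cancel, Fin.val_cast_of_lt (cutDist_lt x)]

theorem prevCut_eq_self {x : Fin n} (hx : x ∈ A) : prevCut hA x = x := by
  rw [prevCut, cutDist_eq (i := 0) (by simpa using hx) (by omega), Nat.cast_zero, sub_zero]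

theorem prevCut_add_natCast {b : Fin n} (hb : b ∈ A) {M : ℕ}
    (hgap : ∀ t : ℕ, 0 < t → t ≤ M → b + t ∉ A) {i : ℕ} (hi : i ≤ M) :
    prevCut hA (b + i) = b := by
  have hdist : cutDist hA (b + i) = i := by
    refine cutDist_eq (by simpa using hb) fun l hl => ?_
    rw [add_sub_assoc, ← Nat.cast_sub hl.le]
    exact hgap (i - l) (by omega) (by omega)
  rw [prevCut, hdist, add_sub_cancel_right]

theorem prevCut_sub_one_of_notMem {x : Fin n} (hx : x ∉ A) :
    prevCut hA (x - 1) = prevCut hA x := by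
  have hpos : 0 < cutDist hA x :=
    Nat.pos_of_ne_zero fun h0 => hx (by simpa [prevCut, h0] using prevCut_mem (hA := hA) x)
  have hdist : cutDist hA (x - 1) = cutDist hA x - 1 := by
    refine cutDist_eq ?_ fun l hl => ?_
    · rw [sub_one_sub_natCast, Nat.sub_add_cancel hpos]
      exact prevCut_mem x
    · rw [sub_one_sub_natCast]
      exact sub_natCast_notMem_of_lt_cutDist (by omega)
  rw [prevCut, prevCut, hdist, sub_one_sub_natCast, Nat.sub_add_cancel hpos]

theorem prevCut_sub_one_ne (h2 : 2 ≤ A.card) (x : Fin n) :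
    prevCut hA (x - 1) ≠ x := by
  intro heq
  obtain ⟨a, ha, hax⟩ := Finset.exists_mem_ne h2 x
  have hdist : cutDist hA (x - 1) = n - 1 := by
    rw [← val_sub_prevCut, heq, sub_sub_cancel_left, val_neg_one]
  have hle : cutDist hA (x - 1) ≤ (x - 1 - a).val := cutDist_le (by simpa using ha)
  have hsub : x - 1 - a = x - 1 - x :=
    Fin.ext (by rw [sub_sub_cancel_left, val_neg_one]; have := (x - 1 - a).isLt; omega)
  exact hax (sub_right_injective hsub)

theorem prevCut_sub_one_eq_iff (h2 : 2 ≤ A.card) {x : Fin n} :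
    prevCut hA (x - 1) = prevCut hA x ↔ x ∉ A := by
  refine ⟨fun h hx => prevCut_sub_one_ne (hA := hA) h2 x ?_, prevCut_sub_one_of_notMem⟩
  rw [h, prevCut_eq_self hx]

theorem exists_setOf_prevCut_eq (h2 : 2 ≤ A.card) {b : Fin n} (hb : b ∈ A) :
    ∃ M : ℕ, {x | prevCut hA x = b} = {x | ∃ i ≤ M, x = b + i} := by
  obtain ⟨a, ha, hab⟩ := Finset.exists_mem_ne h2 b
  have hnext : ∃ M : ℕ, b + ((M + 1 : ℕ) : Fin n) ∈ A := by
    refine ⟨(a - b).val - 1, ?_⟩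
    have hpos : 0 < (a - b).val :=
      Nat.pos_of_ne_zero (Fin.val_ne_zero_iff.mpr (sub_ne_zero.mpr hab))
    rwa [Nat.sub_add_cancel hpos, Fin.cast_val_eq_self, add_sub_cancel]
  have hgap : ∀ t : ℕ, 0 < t → t ≤ Nat.find hnext → b + t ∉ A := fun t ht htM hmem =>
    Nat.find_min hnext (m := t - 1) (by omega) (by rwa [Nat.sub_add_cancel ht])
  refine ⟨Nat.find hnext, Set.ext fun x => ⟨fun hx => ?_, ?_⟩⟩
  · refine ⟨cutDist hA x, ?_, ?_⟩
    · by_contra! hlt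
      refine sub_natCast_notMem_of_lt_cutDist (hA := hA) (x := x)
        (l := cutDist hA x - (Nat.find hnext + 1)) (by omega) ?_
      have hshift : x - ((cutDist hA x - (Nat.find hnext + 1) : ℕ) : Fin n) =
          prevCut hA x + ((Nat.find hnext + 1 : ℕ) : Fin n) := by
        rw [prevCut, Nat.cast_sub hlt]; ring
      rw [hshift, hx]
      exact Nat.find_spec hnext
    · rw [← val_sub_prevCut, hx, Fin.cast_val_eq_self, add_sub_cancel]
  · rintro ⟨i, hi, rfl⟩
    exact prevCut_add_natCast hb hgap hi

end PrevCut

/-- The partition of the circle into the arcs between consecutive points of `A`. For `A = ∅`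
the relation is vacuous, giving the partition with a single block. -/
noncomputable def ofCuts (A : Finset (Fin n)) : Setoid (Fin n) where
  r x y := ∀ hA : A.Nonempty, prevCut hA x = prevCut hA y
  iseqv := ⟨fun _ _ => rfl, fun h hA => (h hA).symm, fun h h' hA => (h hA).trans (h' hA)⟩

theorem isCyclicIntervalSetoid_ofCuts {A : Finset (Fin n)} (h1 : A.card ≠ 1) :
    IsCyclicIntervalSetoid (ofCuts A) := by
  intro a
  rw [isCyclicInterval_iff]
  by_cases hA : A.Nonempty
  · obtain ⟨M, hM⟩ :=
      exists_setOf_prevCut_eq (A.two_le_card_of_card_ne_one h1 hA) (prevCut_mem (hA := hA) a)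
    exact ⟨prevCut hA a, M, hM ▸ Set.ext fun x => ⟨fun h => (h hA).symm, fun h _ => h.symm⟩⟩
  · refine ⟨a, n - 1, Set.ext fun x => ⟨fun _ => ⟨(x - a).val, by omega, by simp⟩, ?_⟩⟩
    exact fun _ hA' => absurd hA' hA

theorem cuts_ofCuts {A : Finset (Fin n)} (h1 : A.card ≠ 1) : cuts (ofCuts A) = A := by
  ext x
  rw [mem_cuts, not_iff_comm]
  by_cases hA : A.Nonempty
  · have h2 := A.two_le_card_of_card_ne_one h1 hA
    exact ⟨fun hx _ => ((prevCut_sub_one_eq_iff h2).mpr hx).symm,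
      fun h => (prevCut_sub_one_eq_iff h2).mp (h hA).symm⟩
  · exact ⟨fun _ hA' => absurd hA' hA, fun _ hx => hA ⟨x, hx⟩⟩

section CyclicIntervalSetoid

variable {s : Setoid (Fin n)}

theorem rel_prevCut (hA : (cuts s).Nonempty) (x : Fin n) : s.r x (prevCut hA x) :=
  rel_sub_natCast fun _ hl => sub_natCast_notMem_of_lt_cutDist hl

theorem exists_rel_iff_of_isCyclicIntervalSetoid (hs : IsCyclicIntervalSetoid s)
    (hA : (cuts s).Nonempty) (x : Fin n) :
    ∃ (b : Fin n) (k : ℕ), b ∈ cuts s ∧ (∀ t : ℕ, 0 < t → t ≤ k → b + t ∉ cuts s) ∧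
      ∀ z, s.r x z ↔ ∃ i ≤ k, z = b + i := by
  obtain ⟨b, k, hB⟩ := isCyclicInterval_iff.mp (hs x)
  have hblock : ∀ z, s.r x z ↔ ∃ i ≤ k, z = b + i := fun z => Set.ext_iff.mp hB z
  have hk : k + 1 < n := by
    by_contra! hk
    obtain ⟨w, hw⟩ := hA
    have hall : ∀ z, s.r x z := fun z =>
      (hblock z).mpr ⟨(z - b).val, by have := (z - b).isLt; omega, by simp⟩
    exact mem_cuts.mp hw (s.trans (s.symm (hall w)) (hall (w - 1)))
  have hxb : s.r x b := (hblock b).mpr ⟨0, k.zero_le, by simp⟩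
  refine ⟨b, k, mem_cuts.mpr fun hb => ?_, fun t ht htk hcut => ?_, hblock⟩
  · obtain ⟨i, hi, hbi⟩ := (hblock (b - 1)).mp (s.trans hxb hb)
    refine natCast_ne_zero_of_lt (n := n) (a := i + 1) (by omega) (by omega) ?_
    rw [Nat.cast_succ, ← add_right_inj b, ← add_assoc, ← hbi]
    ring
  · have hprev : b + t - 1 = b + ((t - 1 : ℕ) : Fin n) := by
      rw [Nat.cast_sub ht]; ring
    refine mem_cuts.mp hcut (s.trans (s.symm ((hblock _).mpr ⟨t, htk, rfl⟩)) ?_)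
    exact hprev ▸ (hblock _).mpr ⟨t - 1, by omega, rfl⟩

theorem ofCuts_cuts (hs : IsCyclicIntervalSetoid s) : ofCuts (cuts s) = s := by
  ext x y
  by_cases hA : (cuts s).Nonempty
  · constructor
    · intro h
      exact s.trans (rel_prevCut hA x) (s.symm (h hA ▸ rel_prevCut hA y))
    · intro hxy hA'
      obtain ⟨b, k, hb, hgap, hblock⟩ := exists_rel_iff_of_isCyclicIntervalSetoid hs hA' x
      obtain ⟨i, hi, hx⟩ := (hblock x).mp (s.refl x)
      obtain ⟨j, hj, hy⟩ := (hblock y).mp hxy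
      rw [hx, hy, prevCut_add_natCast hb hgap hi, prevCut_add_natCast hb hgap hj]
  · have hnone : ∀ z, z ∉ cuts s := fun z hz => hA ⟨z, hz⟩
    refine ⟨fun _ => ?_, fun _ hA' => absurd hA' hA⟩
    simpa using rel_sub_natCast (s := s) (x := x) (i := (x - y).val) fun l _ => hnone _

end CyclicIntervalSetoid

noncomputable def cutsEquiv :
    {s : Setoid (Fin n) // IsCyclicIntervalSetoid s} ≃ {A : Finset (Fin n) // A.card ≠ 1} where
  toFun s := ⟨cuts s.1, card_cuts_ne_one s.1⟩
  invFun A := ⟨ofCuts A.1, isCyclicIntervalSetoid_ofCuts A.2⟩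
  left_inv s := Subtype.ext (ofCuts_cuts s.2)
  right_inv A := Subtype.ext (cuts_ofCuts A.2)

end CyclicIntervalPartition

theorem card_cyclicIntervalPartitions (n : ℕ) (hn : 1 ≤ n) :
    Nat.card {s : Setoid (Fin n) // IsCyclicIntervalSetoid s} = 2 ^ n - n := by
  have : NeZero n := ⟨by omega⟩
  rw [Nat.card_congr CyclicIntervalPartition.cutsEquiv, Nat.card_eq_fintype_card,
    card_finset_card_ne_one, Fintype.card_fin]
end

section
/- The Möbius function of the lattice of cyclic-interval partitions of {1,...,n}, evaluated on the full interval [0_n, 1_n], equals (-1)^{n+1}(n-1). -/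
attribute [local instance] Classical.propDecidable

/-!
A cyclic-interval partition of `Fin n` is determined by the set `J` of positions lying in the
block of their cyclic predecessor: the blocks are the maximal cyclic runs it glues together.
Refinement is inclusion of these sets, and every `J` occurs except those missing exactly one
position, since a single block start chains every position to it. So each interval `[0_n, π]`
with `π ≠ 1_n` is Boolean, `μ(0_n, π) = (-1)^#J`, and by the partial alternating sums of
binomial coefficients `μ(0_n, 1_n) = -∑_{#J ≤ n-2} (-1)^#J = -(-1)^(n-2) (n-1)`.
-/

open Finset
open scoped Fin.NatCast Fin.CommRing

theorem Finset.sum_powerset_filter_card_le_neg_one_pow {α : Type*} {s : Finset α}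
    (hs : s.Nonempty) (m : ℕ) :
    ∑ t ∈ s.powerset with #t ≤ m, (-1 : ℤ) ^ #t = (-1) ^ m * (#s - 1).choose m := by
  obtain ⟨N, hN⟩ : ∃ N, #s = N + 1 := ⟨#s - 1, by have := hs.card_pos; omega⟩
  rw [← sum_fiberwise_of_maps_to (g := card) (t := range (m + 1))
    (fun t ht => mem_range.2 (Nat.lt_succ_of_le (mem_filter.1 ht).2))]
  have hfiber : ∀ k ∈ range (m + 1),
      ∑ t ∈ {t ∈ s.powerset | #t ≤ m} with #t = k, (-1 : ℤ) ^ #t =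
        (-1) ^ k * (#s).choose k := by
    intro k hk
    have hset : {t ∈ s.powerset | #t ≤ m ∧ #t = k} = s.powersetCard k := by
      ext t
      simp only [mem_filter, mem_powerset, mem_powersetCard]
      constructor
      · exact fun h => ⟨h.1, h.2.2⟩
      · exact fun h => ⟨h.1, by have := mem_range.1 hk; omega, h.2⟩
    rw [filter_filter, hset, sum_congr rfl fun t ht => by rw [(mem_powersetCard.1 ht).2],
      sum_const, card_powersetCard, nsmul_eq_mul, mul_comm]
  rw [sum_congr rfl hfiber, hN, Int.alternating_sum_range_choose_eq_choose, Nat.add_sub_cancel]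

theorem eq_of_sum_filter_Icc_eq {P M : Type*} [PartialOrder P] [Fintype P] [AddCommGroup M]
    {a c : P} {f g : P → M} (hac : a ≤ c) (h : ∀ b, a ≤ b → b ≤ c →
      ∑ z ∈ univ with a ≤ z ∧ z ≤ b, f z = ∑ z ∈ univ with a ≤ z ∧ z ≤ b, g z) :
    f c = g c := by
  induction c using WellFoundedLT.induction with
  | _ c ih =>
  have hc : c ∈ univ.filter fun z => a ≤ z ∧ z ≤ c := by simp [hac]
  have hrest : ∑ z ∈ (univ.filter fun z => a ≤ z ∧ z ≤ c).erase c, f z =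
      ∑ z ∈ (univ.filter fun z => a ≤ z ∧ z ≤ c).erase c, g z := by
    refine sum_congr rfl fun z hz => ?_
    obtain ⟨hzc, haz, hzc'⟩ := by simpa using hz
    exact ih z (lt_of_le_of_ne hzc' hzc) haz fun b hab hbz => h b hab (hbz.trans hzc')
  have := h c hac le_rfl
  rwa [← add_sum_erase _ _ hc, ← add_sum_erase _ _ hc, hrest, add_left_inj] at this

section OrderEmbeddingFinset

variable {P ι : Type*} [PartialOrder P] [Fintype ι]

theorem sum_filter_Icc_neg_one_pow_card [Fintype P] (f : P ↪o Finset ι)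
    (hf : ∀ U, U ∈ Set.range f ↔ U = univ ∨ #U + 2 ≤ Fintype.card ι)
    {bot z : P} (hbot : ∀ x, bot ≤ x) (hz : f z ≠ univ) :
    ∑ w ∈ univ with bot ≤ w ∧ w ≤ z, (-1 : ℤ) ^ #(f w) =
      ∑ U ∈ (f z).powerset, (-1) ^ #U := by
  refine sum_nbij f (fun w hw => ?_) (f.injective.injOn) (fun U hU => ?_) (fun _ _ => rfl)
  · simpa using f.le_iff_le.2 (mem_filter.1 hw).2.2
  · have hcard : #(f z) + 2 ≤ Fintype.card ι := ((hf _).1 ⟨z, rfl⟩).resolve_left hz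
    have hU' : U ⊆ f z := mem_powerset.1 hU
    have := card_le_card hU'
    obtain ⟨w, rfl⟩ := (hf U).2 (Or.inr (by omega))
    exact ⟨w, by simpa [hbot] using f.le_iff_le.1 hU', rfl⟩

theorem apply_eq_univ_iff (f : P ↪o Finset ι)
    (hf : ∀ U, U ∈ Set.range f ↔ U = univ ∨ #U + 2 ≤ Fintype.card ι) {top z : P}
    (htop : ∀ x, x ≤ top) : f z = univ ↔ z = top := by
  obtain ⟨w, hw⟩ := (hf univ).2 (Or.inl rfl)
  have hftop : f top = univ := eq_univ_of_forall fun i => f.le_iff_le.2 (htop w) (hw ▸ mem_univ i)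
  rw [← hftop, f.injective.eq_iff]

theorem apply_eq_empty_iff (f : P ↪o Finset ι)
    (hf : ∀ U, U ∈ Set.range f ↔ U = univ ∨ #U + 2 ≤ Fintype.card ι)
    (hι : 2 ≤ Fintype.card ι) {bot z : P} (hbot : ∀ x, bot ≤ x) :
    f z = ∅ ↔ z = bot := by
  obtain ⟨w, hw⟩ := (hf ∅).2 (Or.inr (by simpa using hι))
  have hfbot : f bot = ∅ := subset_empty.1 (hw ▸ f.le_iff_le.2 (hbot w))
  rw [← hfbot, f.injective.eq_iff]

theorem sum_ne_top_neg_one_pow_card [Fintype P] [DecidableEq P] (f : P ↪o Finset ι)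
    (hf : ∀ U, U ∈ Set.range f ↔ U = univ ∨ #U + 2 ≤ Fintype.card ι) {top : P}
    (htop : ∀ x, x ≤ top) :
    ∑ w ∈ univ.erase top, (-1 : ℤ) ^ #(f w) =
      ∑ U ∈ (univ : Finset ι).powerset with #U + 2 ≤ Fintype.card ι, (-1) ^ #U := by
  refine sum_nbij f (fun w hw => ?_) f.injective.injOn (fun U hU => ?_) (fun _ _ => rfl)
  · have hne : f w ≠ univ := (apply_eq_univ_iff f hf htop).not.2 (ne_of_mem_erase hw)
    have := ((hf _).1 ⟨w, rfl⟩).resolve_left hne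
    simpa using this
  · have hU' := (mem_filter.1 hU).2
    obtain ⟨w, rfl⟩ := (hf U).2 (Or.inr hU')
    refine ⟨w, mem_erase.2 ⟨fun hw => ?_, mem_univ w⟩, rfl⟩
    rw [← apply_eq_univ_iff f hf htop] at hw
    simp [hw] at hU'

theorem mobius_top_of_orderEmbedding [Fintype P] [DecidableEq P] (f : P ↪o Finset ι)
    (hf : ∀ U, U ∈ Set.range f ↔ U = univ ∨ #U + 2 ≤ Fintype.card ι)
    (hι : 2 ≤ Fintype.card ι) (μ : P → ℤ) {bot top : P}
    (hbot : ∀ x, bot ≤ x) (htop : ∀ x, x ≤ top)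
    (hμ : ∀ b, ∑ z ∈ univ with bot ≤ z ∧ z ≤ b, μ z = if bot = b then 1 else 0) :
    μ top = (-1) ^ (Fintype.card ι + 1) * (Fintype.card ι - 1 : ℤ) := by
  have hμ_of_ne_top : ∀ z ≠ top, μ z = (-1) ^ #(f z) := fun z hz =>
    eq_of_sum_filter_Icc_eq (g := fun w => (-1) ^ #(f w)) (hbot z) fun b _ hbz => by
      have hb : f b ≠ univ :=
        (apply_eq_univ_iff f hf htop).not.2 fun h => hz (le_antisymm (htop z) (h ▸ hbz))
      rw [hμ b, sum_filter_Icc_neg_one_pow_card f hf hbot hb, sum_powerset_neg_one_pow_card]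
      simp only [apply_eq_empty_iff f hf hι hbot, eq_comm]
  have hbot_ne_top : bot ≠ top := by
    intro h
    have huniv := (apply_eq_univ_iff f hf htop).2 h
    rw [(apply_eq_empty_iff f hf hι hbot).2 rfl, eq_comm, univ_eq_empty_iff,
      ← Fintype.card_eq_zero_iff] at huniv
    omega
  have htotal := hμ top
  rw [if_neg hbot_ne_top, filter_true_of_mem fun z _ => ⟨hbot z, htop z⟩,
    ← add_sum_erase _ _ (mem_univ top),
    sum_congr rfl fun z hz => hμ_of_ne_top z (ne_of_mem_erase hz),
    sum_ne_top_neg_one_pow_card f hf htop] at htotal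
  obtain ⟨m, hm⟩ : ∃ m, Fintype.card ι = m + 2 := ⟨Fintype.card ι - 2, by omega⟩
  have : Nonempty ι := Fintype.card_pos_iff.1 (by omega)
  simp only [hm, add_le_add_iff_right] at htotal
  rw [sum_powerset_filter_card_le_neg_one_pow univ_nonempty, card_univ, hm,
    show m + 2 - 1 = m + 1 by omega, Nat.choose_succ_self_right] at htotal
  rw [hm]
  push_cast at htotal ⊢
  linear_combination htotal

end OrderEmbeddingFinset

section CyclicIntervalPartitions

variable {n : ℕ} [NeZero n]

theorem finRotate_pow_apply_eq_add (i : ℕ) (x : Fin n) : (finRotate n ^ i) x = x + i := by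
  induction i with
  | zero => simp
  | succ k ih =>
    rw [pow_succ', Equiv.Perm.mul_apply, ih, finRotate_apply]
    push_cast
    ring

theorem isCyclicIntervalSetoid_iff {s : Setoid (Fin n)} :
    IsCyclicIntervalSetoid s ↔
      ∀ a, ∃ (b : Fin n) (k : ℕ), ∀ x, s.r a x ↔ ∃ i ≤ k, x = b + i := by
  simp [IsCyclicIntervalSetoid, IsCyclicInterval, finRotate_pow_apply_eq_add, Set.ext_iff]

theorem isCyclicIntervalSetoid_top : IsCyclicIntervalSetoid (⊤ : Setoid (Fin n)) :=
  isCyclicIntervalSetoid_iff.2 fun a =>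
    ⟨a, n, fun x => iff_of_true trivial ⟨(x - a).val, (x - a).isLt.le, by simp⟩⟩

/-- Junk value `0` when `S = ∅`, making `cyclicFloor ∅` the identity. -/
noncomputable def backGap (S : Finset (Fin n)) (x : Fin n) : ℕ :=
  sInf {m : ℕ | x - m ∈ S}

noncomputable def cyclicFloor (S : Finset (Fin n)) (x : Fin n) : Fin n :=
  x - backGap S x

variable {S : Finset (Fin n)} {x b : Fin n} {m i : ℕ}

theorem backGap_le (h : x - m ∈ S) : backGap S x ≤ m :=
  Nat.sInf_le h

theorem sub_notMem_of_lt_backGap (h : m < backGap S x) : x - m ∉ S :=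
  Nat.notMem_of_lt_sInf h

theorem cyclicFloor_mem (hS : S.Nonempty) (x : Fin n) : cyclicFloor S x ∈ S := by
  obtain ⟨y, hy⟩ := hS
  exact Nat.sInf_mem (s := {m : ℕ | x - m ∈ S}) ⟨(x - y).val, by simpa using hy⟩

theorem cyclicFloor_of_mem (h : x ∈ S) : cyclicFloor S x = x := by
  simp [cyclicFloor, Nat.le_zero.1 (backGap_le (x := x) (m := 0) (by simpa using h))]

theorem cyclicFloor_sub (hS : S.Nonempty) (h : m ≤ backGap S x) :
    cyclicFloor S (x - m) = cyclicFloor S x := by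
  have hgap : backGap S (x - m) = backGap S x - m := by
    refine le_antisymm (backGap_le ?_) (Nat.sub_le_of_le_add ?_)
    · simpa [Nat.cast_sub h, cyclicFloor] using cyclicFloor_mem hS x
    · by_contra! hlt
      refine sub_notMem_of_lt_backGap (m := backGap S (x - m) + m) (by omega) ?_
      simpa [cyclicFloor, sub_sub, add_comm] using cyclicFloor_mem hS (x - m)
  rw [cyclicFloor, cyclicFloor, hgap, Nat.cast_sub h]
  ring

theorem cyclicFloor_add (hb : b ∈ S) (h : ∀ j, 1 ≤ j → j ≤ i → b + j ∉ S) :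
    cyclicFloor S (b + i) = b := by
  have hgap : backGap S (b + i) = i := by
    refine le_antisymm (backGap_le (by simpa using hb)) ?_
    by_contra! hlt
    refine h (i - backGap S (b + i)) (by omega) (by omega) ?_
    simpa [Nat.cast_sub hlt.le, cyclicFloor, sub_sub_eq_add_sub, add_sub_assoc] using
      cyclicFloor_mem ⟨b, hb⟩ (b + i)
  simp [cyclicFloor, hgap]

namespace Setoid

variable {s t : Setoid (Fin n)}

noncomputable def blockStarts (s : Setoid (Fin n)) : Finset (Fin n) :=
  {x | ¬ s.r (x - 1) x}

@[simp]
theorem mem_blockStarts {x : Fin n} : x ∈ s.blockStarts ↔ ¬ s.r (x - 1) x := by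
  simp [blockStarts]

theorem blockStarts_subset_of_le (h : s ≤ t) : t.blockStarts ⊆ s.blockStarts := fun _ hx =>
  mem_blockStarts.2 fun hr => mem_blockStarts.1 hx (h hr)

theorem rel_sub_of_forall_notMem_blockStarts {x : Fin n} {g : ℕ}
    (h : ∀ m < g, x - m ∉ s.blockStarts) : s.r (x - g) x := by
  induction g with
  | zero => simp
  | succ g ih =>
    have step : s.r (x - g - 1) (x - g) := by simpa using h g (by omega)
    rw [Nat.cast_succ, ← sub_sub]
    exact s.trans step (ih fun m hm => h m (by omega))

theorem rel_cyclicFloor (h : s.blockStarts ⊆ S) (x : Fin n) : s.r (cyclicFloor S x) x :=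
  rel_sub_of_forall_notMem_blockStarts fun _ hm hmem => sub_notMem_of_lt_backGap hm (h hmem)

theorem ker_cyclicFloor_le (h : s.blockStarts ⊆ S) : ker (cyclicFloor S) ≤ s := fun x y hxy =>
  s.trans (s.symm (rel_cyclicFloor h x)) (hxy ▸ rel_cyclicFloor h y)

theorem blockStarts_eq_empty_iff : s.blockStarts = ∅ ↔ s = ⊤ := by
  refine ⟨fun h => eq_top_iff.2 fun x y => ?_, fun h => ?_⟩
  · simpa using rel_sub_of_forall_notMem_blockStarts (s := s) (x := y) (g := (y - x).val)
      (by simp [h])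
  subst h
  ext x
  simp [Setoid.top_def]

theorem card_blockStarts_ne_one (s : Setoid (Fin n)) : #s.blockStarts ≠ 1 := by
  intro h
  obtain ⟨c, hc⟩ := card_eq_one.1 h
  have hfloor : ∀ x, cyclicFloor s.blockStarts x = c := fun x => by
    simpa [hc] using cyclicFloor_mem (S := s.blockStarts) (by simp [hc]) x
  have htop : s = ⊤ := eq_top_iff.2 fun x y =>
    ker_cyclicFloor_le subset_rfl (show cyclicFloor _ x = cyclicFloor _ y by rw [hfloor, hfloor])
  simp [blockStarts_eq_empty_iff.2 htop] at h

end Setoid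

namespace IsCyclicIntervalSetoid

variable {s t : Setoid (Fin n)}

theorem le_ker_cyclicFloor (hs : IsCyclicIntervalSetoid s) (hne : s.blockStarts.Nonempty) :
    s ≤ Setoid.ker (cyclicFloor s.blockStarts) := by
  intro x y hxy
  obtain ⟨b, k, hblock⟩ := isCyclicIntervalSetoid_iff.1 hs x
  have rel_of_le : ∀ i j, i ≤ k → j ≤ k → s.r (b + i) (b + j) := fun i j hi hj =>
    s.trans (s.symm ((hblock _).2 ⟨i, hi, rfl⟩)) ((hblock _).2 ⟨j, hj, rfl⟩)
  have hk : k + 2 ≤ n := by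
    by_contra! hk
    refine hne.ne_empty (Setoid.blockStarts_eq_empty_iff.2 (eq_top_iff.2 fun y z _ => ?_))
    have hmem : ∀ y : Fin n, s.r x y := fun y =>
      (hblock y).2 ⟨(y - b).val, by have := (y - b).isLt; omega, by simp⟩
    exact s.trans (s.symm (hmem y)) (hmem z)
  have hb : b ∈ s.blockStarts := by
    refine Setoid.mem_blockStarts.2 fun hr => ?_
    obtain ⟨i, hi, heq⟩ := (hblock (b - 1)).1
      (s.trans ((hblock b).2 ⟨0, k.zero_le, by simp⟩) (s.symm hr))
    have hzero : ((i + 1 : ℕ) : Fin n) = 0 := by push_cast; linear_combination -heq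
    have := Nat.le_of_dvd (by omega) (Fin.natCast_eq_zero.1 hzero)
    omega
  have hfloor : ∀ i ≤ k, cyclicFloor s.blockStarts (b + i) = b := fun i hi =>
    cyclicFloor_add hb fun j hj1 hj2 hj => Setoid.mem_blockStarts.1 hj <| by
      simpa [Nat.cast_sub hj1, add_sub_assoc] using rel_of_le (j - 1) j (by omega) (by omega)
  obtain ⟨i, hi, rfl⟩ := (hblock x).1 (s.refl x)
  obtain ⟨j, hj, rfl⟩ := (hblock _).1 hxy
  exact (hfloor i hi).trans (hfloor j hj).symm

theorem le_of_blockStarts_subset (hs : IsCyclicIntervalSetoid s)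
    (h : t.blockStarts ⊆ s.blockStarts) : s ≤ t := by
  rcases s.blockStarts.eq_empty_or_nonempty with hS | hS
  · rw [hS, subset_empty, Setoid.blockStarts_eq_empty_iff] at h
    exact h ▸ le_top
  · exact (le_ker_cyclicFloor hs hS).trans (Setoid.ker_cyclicFloor_le h)

end IsCyclicIntervalSetoid

theorem isCyclicIntervalSetoid_ker_cyclicFloor (hS : S.Nonempty) :
    IsCyclicIntervalSetoid (Setoid.ker (cyclicFloor S)) := by
  refine isCyclicIntervalSetoid_iff.2 fun a => ?_
  obtain ⟨x₀, hx₀, hmax⟩ := exists_max_image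
    (univ.filter fun x => cyclicFloor S x = cyclicFloor S a) (backGap S) ⟨a, by simp⟩
  simp only [mem_filter, mem_univ, true_and] at hx₀ hmax
  refine ⟨cyclicFloor S a, backGap S x₀, fun x => ⟨fun hx => ?_, ?_⟩⟩
  · refine ⟨backGap S x, hmax x hx.symm, ?_⟩
    rw [Setoid.ker_def.1 hx, cyclicFloor, sub_add_cancel]
  · rintro ⟨i, hi, rfl⟩
    have hshift : cyclicFloor S a + i = x₀ - ((backGap S x₀ - i : ℕ) : Fin n) := by
      rw [Nat.cast_sub hi, ← hx₀, cyclicFloor]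
      ring
    rw [Setoid.ker_def, hshift, cyclicFloor_sub hS (Nat.sub_le _ _), hx₀]

theorem blockStarts_ker_cyclicFloor (hS : 2 ≤ #S) :
    (Setoid.ker (cyclicFloor S)).blockStarts = S := by
  have hne : S.Nonempty := card_pos.1 (by omega)
  ext x
  rw [Setoid.mem_blockStarts, Setoid.ker_def]
  constructor
  · intro h
    by_contra hx
    have hgap : 1 ≤ backGap S x := Nat.one_le_iff_ne_zero.2 fun h0 =>
      hx (by simpa [cyclicFloor, h0] using cyclicFloor_mem hne x)
    exact h (by simpa using cyclicFloor_sub hne hgap)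
  · intro hx heq
    -- `x - 1` would then be `n - 1` steps past `x`, leaving no room for a second element of `S`
    rw [cyclicFloor_of_mem hx, cyclicFloor] at heq
    obtain ⟨y, hy, hyx⟩ := exists_mem_ne hS x
    set g := backGap S (x - 1)
    have hzero : ((g + 1 : ℕ) : Fin n) = 0 := by
      push_cast
      linear_combination -heq
    have hng : n ≤ g + 1 := Nat.le_of_dvd (by omega) (Fin.natCast_eq_zero.1 hzero)
    have hgy : g ≤ (x - 1 - y).val := backGap_le (by simpa using hy)
    have hg : g = (x - 1 - y).val := by have := (x - 1 - y).isLt; omega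
    rw [hg] at heq
    exact hyx (by simpa using heq)

theorem exists_isCyclicIntervalSetoid_blockStarts_eq_iff {T : Finset (Fin n)} :
    (∃ s, IsCyclicIntervalSetoid s ∧ s.blockStarts = T) ↔ T = ∅ ∨ 2 ≤ #T := by
  constructor
  · rintro ⟨s, -, rfl⟩
    have := s.card_blockStarts_ne_one
    rcases s.blockStarts.eq_empty_or_nonempty with h | h
    · exact Or.inl h
    · exact Or.inr (by have := h.card_pos; omega)
  · rintro (rfl | hT)
    · exact ⟨⊤, isCyclicIntervalSetoid_top, Setoid.blockStarts_eq_empty_iff.2 rfl⟩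
    · exact ⟨_, isCyclicIntervalSetoid_ker_cyclicFloor (card_pos.1 (by omega)),
        blockStarts_ker_cyclicFloor hT⟩

noncomputable def gluedPositions :
    {s : Setoid (Fin n) // IsCyclicIntervalSetoid s} ↪o Finset (Fin n) :=
  OrderEmbedding.ofMapLEIff (fun s => s.1.blockStartsᶜ) fun s t => by
    rw [compl_subset_compl]
    exact ⟨IsCyclicIntervalSetoid.le_of_blockStarts_subset s.2, Setoid.blockStarts_subset_of_le⟩

theorem mem_range_gluedPositions_iff {U : Finset (Fin n)} :
    U ∈ Set.range gluedPositions ↔ U = univ ∨ #U + 2 ≤ n := by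
  have hrange : U ∈ Set.range gluedPositions ↔
      ∃ s, IsCyclicIntervalSetoid s ∧ s.blockStarts = Uᶜ := by
    constructor
    · rintro ⟨s, rfl⟩
      exact ⟨s.1, s.2, (compl_compl _).symm⟩
    · rintro ⟨s, hs, h⟩
      exact ⟨⟨s, hs⟩, by simp [gluedPositions, h]⟩
  have hU := card_le_univ U
  rw [hrange, exists_isCyclicIntervalSetoid_blockStarts_eq_iff, compl_eq_empty_iff, card_compl]
  simp only [Fintype.card_fin] at hU ⊢
  exact or_congr Iff.rfl (by omega)

end CyclicIntervalPartitions

theorem mobius_cyclicIntervalPartitions (n : ℕ) (hn : 2 ≤ n)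
    (μ : {s : Setoid (Fin n) // IsCyclicIntervalSetoid s} →
      {s : Setoid (Fin n) // IsCyclicIntervalSetoid s} → ℤ)
    (hμ : ∀ a b, a ≤ b →
      (∑ z ∈ Finset.univ.filter (fun z => a ≤ z ∧ z ≤ b), μ a z) = if a = b then 1 else 0)
    (bot top : {s : Setoid (Fin n) // IsCyclicIntervalSetoid s})
    (hbot : ∀ x, bot ≤ x) (htop : ∀ x, x ≤ top) :
    μ bot top = (-1) ^ (n + 1) * (n - 1 : ℤ) := by
  have : NeZero n := ⟨by omega⟩
  simpa using mobius_top_of_orderEmbedding gluedPositions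
    (fun U => by rw [Fintype.card_fin]; exact mem_range_gluedPositions_iff) (by simpa using hn)
    (μ bot) hbot htop fun b => hμ bot b (hbot b)
end

section
/- The number of almost-interval partitions of {1,...,n} equals the odd-indexed Fibonacci number F_{2n-1}, where F_1 = F_2 = 1. In particular the counts are 1, 2, 5, 13, 34, 89, ... for n = 1, 2, 3, 4, 5, 6. -/
attribute [local instance] Classical.propDecidable

/-!
Call a partition *interval on non-singletons* if every non-singleton element lying between two
elements of a block belongs to that block. This is equivalent to being almost-interval, and it
already rules out crossings. Such a partition is recorded by marking every element as a singleton
(`single`), as the largest element of a larger block (`last`), or as neither (`cont`). Read from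
left to right, a block is pending from its first element until its `last` one, and the words that
arise from partitions are exactly those driving the automaton `Phase.step` from `closed` back to
`closed`. Counting words of length `n` by final phase, `C n` closed and `P n` pending, gives
`C (n + 1) = C n + P n` and `P (n + 1) = C n + 2 P n`, solved by `C n = F (2n - 1)` and
`P n = F (2n)`.
-/

open Finset

lemma Setoid.ext_of_lt {α : Type*} [LinearOrder α] {s t : Setoid α}
    (h : ∀ a b, a < b → (s.r a b ↔ t.r a b)) : s = t := by
  ext a b
  rcases lt_trichotomy a b with hab | rfl | hab
  · exact h a b hab
  · exact iff_of_true (s.refl a) (t.refl a)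
  · exact ⟨fun hs => t.symm ((h b a hab).1 (s.symm hs)),
      fun ht => s.symm ((h b a hab).2 (t.symm ht))⟩

lemma Setoid.exists_max_rel {α : Type*} [LinearOrder α] [Finite α] (s : Setoid α) (a : α) :
    ∃ m, s.r a m ∧ ∀ x, s.r a x → x ≤ m :=
  Set.exists_max_image {x | s.r a x} id (Set.toFinite _) ⟨a, s.refl a⟩

lemma exists_first_gt_of_exists {α : Type*} [LinearOrder α] [WellFoundedLT α]
    {p : α → Prop} {b : α} (h : ∃ c, b < c ∧ p c) :
    ∃ c, b < c ∧ p c ∧ ∀ d, b < d → d < c → ¬ p d := by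
  obtain ⟨c, ⟨hbc, hc⟩, hmin⟩ := wellFounded_lt.has_min {c | b < c ∧ p c} h
  exact ⟨c, hbc, hc, fun d hbd hdc hd => hmin d ⟨hbd, hd⟩ hdc⟩

section Automaton

variable {α σ : Type*} (δ : σ → α → σ) (q₀ : σ)

def stateAfter {n : ℕ} (w : Fin n → α) : ℕ → σ
  | 0 => q₀
  | k + 1 => if h : k < n then δ (stateAfter w k) (w ⟨k, h⟩) else stateAfter w k

lemma stateAfter_snoc_of_le {n : ℕ} (w : Fin n → α) (x : α) {k : ℕ} (hk : k ≤ n) :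
    stateAfter δ q₀ (Fin.snoc w x : Fin (n + 1) → α) k = stateAfter δ q₀ w k := by
  induction k with
  | zero => rfl
  | succ k ih =>
    have hk' : k < n := hk
    simp [stateAfter, hk', Nat.lt_succ_of_lt hk', ih hk'.le, Fin.snoc]

lemma stateAfter_snoc {n : ℕ} (w : Fin n → α) (x : α) :
    stateAfter δ q₀ (Fin.snoc w x : Fin (n + 1) → α) (n + 1) =
      δ (stateAfter δ q₀ w n) x := by
  simp [stateAfter, stateAfter_snoc_of_le δ q₀ w x le_rfl, Fin.snoc]

end Automaton

lemma card_filter_pi_fin_succ {α : Type*} [Fintype α] (n : ℕ)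
    (p : (Fin (n + 1) → α) → Prop) [DecidablePred p] :
    #{w | p w} = ∑ x, #{w : Fin n → α | p (Fin.snoc w x)} := by
  rw [card_eq_sum_card_fiberwise (f := fun w => w (Fin.last n)) (t := univ) (by simp)]
  refine sum_congr rfl fun x _ => card_nbij' Fin.init (fun w => Fin.snoc w x) ?_ ?_ ?_ ?_
  · intro w hw
    obtain ⟨hw, rfl⟩ : p w ∧ w (Fin.last n) = x := by simpa using hw
    simpa using hw
  · intro w hw
    simp_all
  · intro w hw
    obtain ⟨-, rfl⟩ : p w ∧ w (Fin.last n) = x := by simpa using hw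
    exact Fin.snoc_init_self w
  · intro w _
    exact Fin.init_snoc (α := fun _ => α) x w

inductive Mark
  | single
  | cont
  | last
  deriving DecidableEq

instance : Fintype Mark := ⟨{.single, .cont, .last}, fun x => by cases x <;> simp⟩

lemma Mark.sum_univ {M : Type*} [AddCommMonoid M] (f : Mark → M) :
    ∑ x, f x = f .single + f .cont + f .last := by
  simp [Finset.univ, Fintype.elems, add_assoc]

inductive Phase
  | closed
  | pending
  | dead
  deriving DecidableEq

namespace Phase

def step : Phase → Mark → Phase
  | closed, .single => closed
  | closed, .cont => pending
  | pending, .single => pending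
  | pending, .cont => pending
  | pending, .last => closed
  | _, _ => dead

lemma step_single (q : Phase) : q.step .single = q := by cases q <;> rfl

lemma dead_step (x : Mark) : dead.step x = dead := by cases x <;> rfl

lemma step_cont_ne_closed (q : Phase) : q.step .cont ≠ closed := by cases q <;> decide

lemma step_last_ne_pending (q : Phase) : q.step .last ≠ pending := by cases q <;> decide

lemma step_last_eq_closed_iff (q : Phase) : q.step .last = closed ↔ q = pending := by
  cases q <;> decide

lemma step_cont_eq_pending_iff (q : Phase) :
    q.step .cont = pending ↔ q = closed ∨ q = pending := by
  cases q <;> decide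

lemma eq_pending_of_step_last_ne_dead {q : Phase} (h : q.step .last ≠ dead) : q = pending := by
  cases q <;> simp_all [step]

end Phase

section Marks

variable {n : ℕ}

def phase (w : Fin n → Mark) (k : ℕ) : Phase := stateAfter Phase.step .closed w k

lemma phase_zero (w : Fin n → Mark) : phase w 0 = .closed := rfl

lemma phase_succ_of_lt (w : Fin n → Mark) {k : ℕ} (hk : k < n) :
    phase w (k + 1) = (phase w k).step (w ⟨k, hk⟩) := by
  simp [phase, stateAfter, hk]

lemma phase_succ_of_le (w : Fin n → Mark) {k : ℕ} (hk : n ≤ k) :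
    phase w (k + 1) = phase w k := by
  simp [phase, stateAfter, hk.not_gt]

lemma phase_snoc (w : Fin n → Mark) (x : Mark) :
    phase (Fin.snoc w x : Fin (n + 1) → Mark) (n + 1) = (phase w n).step x :=
  stateAfter_snoc _ _ w x

lemma phase_eq_of_forall_single {w : Fin n → Mark} {k m : ℕ} (hkm : k ≤ m)
    (h : ∀ d : Fin n, k ≤ d → (d : ℕ) < m → w d = .single) : phase w m = phase w k := by
  induction m, hkm using Nat.le_induction with
  | base => rfl
  | succ m hkm ih =>
    rcases lt_or_ge m n with hm | hm
    · rw [phase_succ_of_lt w hm, h ⟨m, hm⟩ hkm (Nat.lt_succ_self m), Phase.step_single,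
        ih fun d hd hdm => h d hd (Nat.lt_succ_of_lt hdm)]
    · rw [phase_succ_of_le w hm, ih fun d hd hdm => h d hd (Nat.lt_succ_of_lt hdm)]

lemma phase_eq_dead_of_le {w : Fin n → Mark} {k m : ℕ} (hkm : k ≤ m) (h : phase w k = .dead) :
    phase w m = .dead := by
  induction m, hkm using Nat.le_induction with
  | base => exact h
  | succ m hkm ih =>
    rcases lt_or_ge m n with hm | hm
    · rw [phase_succ_of_lt w hm, ih, Phase.dead_step]
    · rw [phase_succ_of_le w hm, ih]

lemma exists_cont_of_phase_eq_pending {w : Fin n → Mark} {k : ℕ} (h : phase w k = .pending) :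
    ∃ a : Fin n, (a : ℕ) < k ∧ w a = .cont ∧
      ∀ d : Fin n, a < d → (d : ℕ) < k → w d = .single := by
  induction k with
  | zero => rw [phase_zero] at h; cases h
  | succ k ih =>
    rcases lt_or_ge k n with hk | hk
    · rw [phase_succ_of_lt w hk] at h
      cases hx : w ⟨k, hk⟩ with
      | single =>
        rw [hx, Phase.step_single] at h
        obtain ⟨a, hak, ha, hsingle⟩ := ih h
        refine ⟨a, by omega, ha, fun d had hdk => ?_⟩
        rcases Nat.lt_succ_iff_lt_or_eq.1 hdk with hdk | hdk
        · exact hsingle d had hdk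
        · obtain rfl : d = ⟨k, hk⟩ := Fin.ext hdk
          exact hx
      | cont =>
        refine ⟨⟨k, hk⟩, Nat.lt_succ_self k, hx, fun d hkd hdk => ?_⟩
        have : k < (d : ℕ) := hkd
        omega
      | last =>
        rw [hx] at h
        exact absurd h (Phase.step_last_ne_pending _)
    · rw [phase_succ_of_le w hk] at h
      obtain ⟨a, hak, ha, hsingle⟩ := ih h
      exact ⟨a, by omega, ha, fun d had _ => hsingle d had (by omega)⟩

lemma exists_gt_ne_single_of_cont {w : Fin n → Mark} (hw : phase w n = .closed) {b : Fin n}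
    (hb : w b = .cont) : ∃ c, b < c ∧ w c ≠ .single := by
  by_contra! h
  have hconst : phase w n = phase w (b + 1) :=
    phase_eq_of_forall_single b.isLt fun d hbd _ => h d (Fin.lt_def.2 hbd)
  rw [hconst, phase_succ_of_lt w b.isLt, hb] at hw
  exact Phase.step_cont_ne_closed _ hw

lemma exists_cont_of_last {w : Fin n → Mark} (hw : phase w n = .closed) {b : Fin n}
    (hb : w b = .last) : ∃ a < b, w a = .cont ∧ ∀ d, a < d → d < b → w d = .single := by
  have hnotdead : phase w (b + 1) ≠ .dead := fun h => by
    rw [phase_eq_dead_of_le b.isLt h] at hw; cases hw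
  rw [phase_succ_of_lt w b.isLt, hb] at hnotdead
  obtain ⟨a, hab, ha, hsingle⟩ :=
    exists_cont_of_phase_eq_pending (Phase.eq_pending_of_step_last_ne_dead hnotdead)
  exact ⟨a, hab, ha, hsingle⟩

lemma mem_nonSingletons_iff {s : Setoid (Fin n)} {x : Fin n} :
    x ∈ nonSingletons s ↔ ∃ y, y ≠ x ∧ s.r x y := by
  simp [nonSingletons]

lemma mem_nonSingletons_of_rel_of_ne {s : Setoid (Fin n)} {x y : Fin n} (h : s.r x y)
    (hne : y ≠ x) : x ∈ nonSingletons s :=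
  mem_nonSingletons_iff.2 ⟨y, hne, h⟩

lemma mem_nonSingletons_of_rel {s : Setoid (Fin n)} {x y : Fin n} (hx : x ∈ nonSingletons s)
    (h : s.r x y) : y ∈ nonSingletons s := by
  obtain rfl | hne := eq_or_ne x y
  · exact hx
  · exact mem_nonSingletons_of_rel_of_ne (s.symm h) hne

lemma RS_rel_iff {s : Setoid (Fin n)} {i j : Fin (nonSingletons s).card} :
    (RS s).r i j ↔
      s.r ((nonSingletons s).orderIsoOfFin rfl i) ((nonSingletons s).orderIsoOfFin rfl j) :=
  Iff.rfl

lemma isIntervalSetoid_RS_iff {s : Setoid (Fin n)} :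
    IsIntervalSetoid (RS s) ↔ ∀ a b c, a ≤ b → b ≤ c → a ∈ nonSingletons s →
      b ∈ nonSingletons s → c ∈ nonSingletons s → s.r a c → s.r a b := by
  set e := (nonSingletons s).orderIsoOfFin rfl
  constructor
  · intro h a b c hab hbc ha hb hc hac
    have := h (e.symm ⟨a, ha⟩) (e.symm ⟨b, hb⟩) (e.symm ⟨c, hc⟩) (by simpa using hab)
      (by simpa using hbc) (by simpa [RS_rel_iff, e] using hac)
    simpa [RS_rel_iff, e] using this
  · intro h i j k hij hjk hik
    exact h (e i) (e j) (e k) (by simpa using hij) (by simpa using hjk) (e i).2 (e j).2 (e k).2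
      hik

def IsIntervalOnNonSingletons (s : Setoid (Fin n)) : Prop :=
  ∀ a b c, a ≤ b → b ≤ c → b ∈ nonSingletons s → s.r a c → s.r a b

lemma IsIntervalOnNonSingletons.isNoncrossing {s : Setoid (Fin n)}
    (hs : IsIntervalOnNonSingletons s) : IsNoncrossing s :=
  fun a b _ _ hab hbc hcd hac hbd =>
    hs a b _ hab.le hbc.le (mem_nonSingletons_of_rel_of_ne hbd (hbc.trans hcd).ne') hac

lemma isAlmostInterval_iff {s : Setoid (Fin n)} :
    IsAlmostInterval s ↔ IsIntervalOnNonSingletons s := by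
  refine ⟨fun ⟨_, hint⟩ a b c hab hbc hb hac => ?_, fun hs => ⟨hs.isNoncrossing, ?_⟩⟩
  · obtain rfl | hac' := eq_or_ne a c
    · obtain rfl := le_antisymm hab hbc
      exact s.refl a
    · exact isIntervalSetoid_RS_iff.1 hint a b c hab hbc
        (mem_nonSingletons_of_rel_of_ne hac hac'.symm) hb
        (mem_nonSingletons_of_rel_of_ne (s.symm hac) hac') hac
  · exact isIntervalSetoid_RS_iff.2 fun a b c hab hbc _ hb _ hac => hs a b c hab hbc hb hac

noncomputable def toMarks (s : Setoid (Fin n)) (b : Fin n) : Mark :=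
  if b ∉ nonSingletons s then .single else if ∃ c, b < c ∧ s.r b c then .cont else .last

section toMarks

variable {s : Setoid (Fin n)} {b : Fin n}

lemma toMarks_eq_single_iff : toMarks s b = .single ↔ b ∉ nonSingletons s := by
  unfold toMarks; split_ifs <;> simp_all

lemma toMarks_eq_cont_iff : toMarks s b = .cont ↔ ∃ c, b < c ∧ s.r b c := by
  by_cases hb : b ∈ nonSingletons s
  · unfold toMarks; split_ifs <;> simp_all
  · have hno : ¬ ∃ c, b < c ∧ s.r b c := fun ⟨c, hbc, h⟩ =>
      hb (mem_nonSingletons_of_rel_of_ne h hbc.ne')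
    simp [toMarks, hb, hno]

lemma toMarks_eq_last_iff :
    toMarks s b = .last ↔ b ∈ nonSingletons s ∧ ∀ c, b < c → ¬ s.r b c := by
  unfold toMarks; split_ifs <;> simp_all

end toMarks

lemma phase_toMarks {s : Setoid (Fin n)} (hs : IsIntervalOnNonSingletons s) (k : ℕ) :
    phase (toMarks s) k =
      if ∃ a c : Fin n, (a : ℕ) < k ∧ k ≤ c ∧ s.r a c then .pending else .closed := by
  induction k with
  | zero => simp [phase_zero]
  | succ k ih =>
    rcases lt_or_ge k n with hk | hk
    · obtain ⟨b, rfl⟩ : ∃ b : Fin n, (b : ℕ) = k := ⟨⟨k, hk⟩, rfl⟩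
      rw [phase_succ_of_lt _ hk, Fin.eta, ih]
      cases hm : toMarks s b with
      | single =>
        have hsingle : ∀ x, s.r b x → x = b := fun x h =>
          by_contra fun hx => toMarks_eq_single_iff.1 hm (mem_nonSingletons_of_rel_of_ne h hx)
        rw [Phase.step_single]
        congr 1
        refine propext ⟨fun ⟨a, c, hak, hkc, hac⟩ => ⟨a, c, by omega, ?_, hac⟩,
          fun ⟨a, c, hak, hkc, hac⟩ => ⟨a, c, ?_, by omega, hac⟩⟩
        · refine lt_of_le_of_ne hkc fun hbc => ?_
          obtain rfl : c = b := Fin.ext hbc.symm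
          obtain rfl := hsingle a (s.symm hac)
          omega
        · refine lt_of_le_of_ne (Nat.lt_succ_iff.1 hak) fun hab => ?_
          obtain rfl : a = b := Fin.ext hab
          obtain rfl := hsingle c hac
          omega
      | cont =>
        obtain ⟨c, hbc, hbc'⟩ := toMarks_eq_cont_iff.1 hm
        have hcross : ∃ a c : Fin n, (a : ℕ) < b + 1 ∧ (b : ℕ) + 1 ≤ c ∧ s.r a c :=
          ⟨b, c, Nat.lt_succ_self b, hbc, hbc'⟩
        rw [if_pos hcross]
        split_ifs <;> rfl
      | last =>
        obtain ⟨hbns, hno⟩ := toMarks_eq_last_iff.1 hm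
        obtain ⟨y, hyb, hby⟩ := mem_nonSingletons_iff.1 hbns
        have hyb' : y < b := lt_of_le_of_ne (not_lt.1 fun h => hno y h hby) hyb
        rw [if_pos ⟨y, b, hyb', le_rfl, s.symm hby⟩, if_neg]
        · rfl
        rintro ⟨a, c, hak, hkc, hac⟩
        have hab : s.r a b :=
          hs a b c (Fin.le_def.2 (by omega)) (Fin.le_def.2 (by omega)) hbns hac
        exact hno c (Fin.lt_def.2 hkc) (s.trans (s.symm hab) hac)
    · rw [phase_succ_of_le _ hk, ih, if_neg, if_neg] <;>
        rintro ⟨a, c, -, hkc, -⟩ <;> omega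

lemma phase_toMarks_eq_closed {s : Setoid (Fin n)} (hs : IsIntervalOnNonSingletons s) :
    phase (toMarks s) n = .closed := by
  rw [phase_toMarks hs, if_neg]
  rintro ⟨a, c, -, hnc, -⟩
  exact absurd c.isLt (not_lt.2 hnc)

def ofMarks (w : Fin n → Mark) : Setoid (Fin n) where
  r a b := a = b ∨
    (w a ≠ .single ∧ w b ≠ .single ∧ ∀ d, min a b ≤ d → d < max a b → w d ≠ .last)
  iseqv := by
    refine ⟨fun a => Or.inl rfl, ?_, ?_⟩
    · rintro a b (rfl | ⟨ha, hb, h⟩)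
      · exact Or.inl rfl
      · exact Or.inr ⟨hb, ha, by simpa only [min_comm, max_comm] using h⟩
    · rintro a b c (rfl | ⟨ha, hb, hab⟩) (rfl | ⟨hb', hc, hbc⟩)
      · exact Or.inl rfl
      · exact Or.inr ⟨hb', hc, hbc⟩
      · exact Or.inr ⟨ha, hb, hab⟩
      · refine Or.inr ⟨ha, hc, fun d h₁ h₂ => ?_⟩
        simp only [min_le_iff, lt_max_iff] at h₁ h₂ hab hbc
        rcases le_or_gt b d with hbd | hdb
        · rcases h₂ with hda | hdc
          · exact hab d (Or.inr hbd) (Or.inl hda)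
          · exact hbc d (Or.inl hbd) (Or.inr hdc)
        · rcases h₁ with had | hcd
          · exact hab d (Or.inl had) (Or.inr hdb)
          · exact hbc d (Or.inr hcd) (Or.inl hdb)

section ofMarks

variable {w : Fin n → Mark}

lemma ofMarks_rel_of_lt {a b : Fin n} (hab : a < b) :
    (ofMarks w).r a b ↔
      w a ≠ .single ∧ w b ≠ .single ∧ ∀ d, a ≤ d → d < b → w d ≠ .last := by
  change a = b ∨ _ ↔ _
  simp [hab.ne, min_eq_left hab.le, max_eq_right hab.le]

lemma ne_single_of_mem_nonSingletons_ofMarks {b : Fin n}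
    (hb : b ∈ nonSingletons (ofMarks w)) : w b ≠ .single := by
  obtain ⟨y, hyb, (rfl | ⟨hb, -⟩)⟩ := mem_nonSingletons_iff.1 hb
  · exact absurd rfl hyb
  · exact hb

lemma isIntervalOnNonSingletons_ofMarks (w : Fin n → Mark) :
    IsIntervalOnNonSingletons (ofMarks w) := by
  intro a b c hab hbc hb hac
  obtain rfl | hab := hab.eq_or_lt
  · exact (ofMarks w).refl a
  obtain rfl | hbc := hbc.eq_or_lt
  · exact hac
  obtain ⟨ha, -, hac⟩ := (ofMarks_rel_of_lt (hab.trans hbc)).1 hac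
  exact (ofMarks_rel_of_lt hab).2
    ⟨ha, ne_single_of_mem_nonSingletons_ofMarks hb, fun d had hdb => hac d had (hdb.trans hbc)⟩

lemma toMarks_ofMarks (hw : phase w n = .closed) : toMarks (ofMarks w) = w := by
  funext b
  cases hb : w b with
  | single =>
    exact toMarks_eq_single_iff.2 fun hns => ne_single_of_mem_nonSingletons_ofMarks hns hb
  | cont =>
    obtain ⟨c, hbc, hc, hfirst⟩ :=
      exists_first_gt_of_exists (exists_gt_ne_single_of_cont hw hb)
    refine toMarks_eq_cont_iff.2 ⟨c, hbc, (ofMarks_rel_of_lt hbc).2 ⟨by simp [hb], hc, ?_⟩⟩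
    intro d hbd hdc
    obtain rfl | hbd := hbd.eq_or_lt
    · simp [hb]
    · simp [not_not.1 (hfirst d hbd hdc)]
  | last =>
    obtain ⟨a, hab, ha, hsingle⟩ := exists_cont_of_last hw hb
    have hab' : (ofMarks w).r a b := by
      refine (ofMarks_rel_of_lt hab).2 ⟨by simp [ha], by simp [hb], fun d had hdb => ?_⟩
      obtain rfl | had := had.eq_or_lt
      · simp [ha]
      · simp [hsingle d had hdb]
    refine toMarks_eq_last_iff.2
      ⟨mem_nonSingletons_of_rel_of_ne ((ofMarks w).symm hab') hab.ne, fun c hbc hbc' => ?_⟩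
    exact ((ofMarks_rel_of_lt hbc).1 hbc').2.2 b le_rfl hbc hb

end ofMarks

lemma ofMarks_toMarks {s : Setoid (Fin n)} (hs : IsIntervalOnNonSingletons s) :
    ofMarks (toMarks s) = s := by
  refine Setoid.ext_of_lt fun a b hab => ?_
  rw [ofMarks_rel_of_lt hab, Ne, Ne, toMarks_eq_single_iff, toMarks_eq_single_iff, not_not,
    not_not]
  constructor
  · rintro ⟨ha, hb, hnolast⟩
    obtain ⟨m, ham, hmax⟩ := s.exists_max_rel a
    -- the largest element `m` of the block of `a` is marked `last`, so it lies beyond `[a, b)`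
    have hm : toMarks s m = .last := toMarks_eq_last_iff.2 ⟨mem_nonSingletons_of_rel ha ham,
      fun c hmc hmc' => (hmax c (s.trans ham hmc')).not_gt hmc⟩
    have hbm : b ≤ m := not_lt.1 fun hmb => hnolast m (hmax a (s.refl a)) hmb hm
    exact hs a b m hab.le hbm hb ham
  · intro hab'
    refine ⟨mem_nonSingletons_of_rel_of_ne hab' hab.ne', mem_nonSingletons_of_rel_of_ne
      (s.symm hab') hab.ne, fun d had hdb hd => ?_⟩
    obtain ⟨hdns, hno⟩ := toMarks_eq_last_iff.1 hd
    exact hno b hdb (s.trans (s.symm (hs a d b had hdb.le hdns hab')) hab')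

noncomputable def marksEquiv :
    {s : Setoid (Fin n) // IsIntervalOnNonSingletons s} ≃
      {w : Fin n → Mark // phase w n = .closed} where
  toFun s := ⟨toMarks s, phase_toMarks_eq_closed s.2⟩
  invFun w := ⟨ofMarks w, isIntervalOnNonSingletons_ofMarks w.1⟩
  left_inv s := Subtype.ext (ofMarks_toMarks s.2)
  right_inv w := Subtype.ext (toMarks_ofMarks w.2)

end Marks

def numWordsInPhase (n : ℕ) (q : Phase) : ℕ := #{w : Fin n → Mark | phase w n = q}

lemma numWordsInPhase_succ (n : ℕ) (q : Phase) :
    numWordsInPhase (n + 1) q = ∑ x, #{w : Fin n → Mark | (phase w n).step x = q} := by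
  simp only [numWordsInPhase, card_filter_pi_fin_succ, phase_snoc]

lemma numWordsInPhase_succ_closed (n : ℕ) :
    numWordsInPhase (n + 1) .closed =
      numWordsInPhase n .closed + numWordsInPhase n .pending := by
  rw [numWordsInPhase_succ, Mark.sum_univ]
  simp only [Phase.step_single, Phase.step_cont_ne_closed, Phase.step_last_eq_closed_iff]
  simp [numWordsInPhase]

lemma numWordsInPhase_succ_pending (n : ℕ) :
    numWordsInPhase (n + 1) .pending =
      numWordsInPhase n .closed + 2 * numWordsInPhase n .pending := by
  rw [numWordsInPhase_succ, Mark.sum_univ]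
  simp only [Phase.step_single, Phase.step_cont_eq_pending_iff, Phase.step_last_ne_pending]
  rw [filter_or, card_union_of_disjoint (disjoint_filter.2 fun w _ h => by simp [h])]
  simp only [numWordsInPhase, filter_false, card_empty]
  ring

lemma numWordsInPhase_eq_fib (n : ℕ) :
    numWordsInPhase (n + 1) .closed = Nat.fib (2 * n + 1) ∧
      numWordsInPhase n .pending = Nat.fib (2 * n) := by
  induction n with
  | zero =>
    rw [numWordsInPhase_succ_closed]
    simp [numWordsInPhase, phase_zero]
  | succ n ih =>
    have hpending : numWordsInPhase (n + 1) .pending = Nat.fib (2 * n + 2) := by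
      rw [numWordsInPhase_succ_pending, Nat.fib_add_two, ← ih.1, ← ih.2,
        numWordsInPhase_succ_closed]
      ring
    refine ⟨?_, hpending⟩
    rw [numWordsInPhase_succ_closed, ih.1, hpending,
      show 2 * (n + 1) + 1 = 2 * n + 1 + 2 by ring, Nat.fib_add_two (n := 2 * n + 1)]

theorem card_almostIntervalPartitions (n : ℕ) (hn : 1 ≤ n) :
    Nat.card {s : Setoid (Fin n) // IsAlmostInterval s} = Nat.fib (2 * n - 1) := by
  obtain ⟨m, rfl⟩ : ∃ m, n = m + 1 := ⟨n - 1, by omega⟩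
  calc Nat.card {s : Setoid (Fin (m + 1)) // IsAlmostInterval s}
      = Nat.card {s : Setoid (Fin (m + 1)) // IsIntervalOnNonSingletons s} :=
        Nat.card_congr (Equiv.subtypeEquivRight fun _ => isAlmostInterval_iff)
    _ = Nat.card {w : Fin (m + 1) → Mark // phase w (m + 1) = .closed} :=
        Nat.card_congr marksEquiv
    _ = numWordsInPhase (m + 1) .closed := by
        rw [Nat.card_eq_fintype_card, Fintype.card_subtype, numWordsInPhase]
    _ = Nat.fib (2 * (m + 1) - 1) := by
        rw [(numWordsInPhase_eq_fib m).1, show 2 * (m + 1) - 1 = 2 * m + 1 by omega]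
end

section
/- The family of almost-interval partitions is singleton-inductive: for all n ≥ 1 and 1 ≤ r ≤ n+1, inserting a singleton block at position r gives a poset isomorphism from the almost-interval partitions of [n] onto the set of almost-interval partitions of [n+1] containing {r} as a singleton block. -/
attribute [local instance] Classical.propDecidable

/-!
`insertSingleton r` is inverted on partitions having `{r}` as a block by pulling back along
`r.succAbove`, and both maps are monotone. Since `r.succAbove` is strictly monotone, inserting a
singleton neither creates nor destroys crossings, and since the new point is a singleton, removing
all singletons afterwards gives back `RS s` up to the identification `Fin.castOrderIso`.
-/

section SingletonInsertion

variable {n : ℕ} (r : Fin (n + 1))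

theorem insertSingleton_rel_succAbove (s : Setoid (Fin n)) (i j : Fin n) :
    (insertSingleton r s).r (r.succAbove i) (r.succAbove j) ↔ s.r i j := by
  constructor
  · rintro (⟨hi, -⟩ | ⟨i', j', hi, hj, hij⟩)
    · exact absurd hi (Fin.succAbove_ne r i)
    · rwa [Fin.succAbove_right_injective hi, Fin.succAbove_right_injective hj]
  · exact fun h => Or.inr ⟨i, j, rfl, rfl, h⟩

theorem comap_succAbove_insertSingleton (s : Setoid (Fin n)) :
    (insertSingleton r s).comap r.succAbove = s :=
  Setoid.ext (insertSingleton_rel_succAbove r s)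

theorem isSingletonBlock_insertSingleton (s : Setoid (Fin n)) :
    IsSingletonBlock r (insertSingleton r s) := by
  rintro y (⟨-, rfl⟩ | ⟨i, j, hi, -, -⟩)
  · rfl
  · exact absurd hi.symm (Fin.succAbove_ne r i)

theorem insertSingleton_comap_succAbove {σ : Setoid (Fin (n + 1))} (hσ : IsSingletonBlock r σ) :
    insertSingleton r (σ.comap r.succAbove) = σ := by
  refine Setoid.ext fun a b => ⟨?_, fun h => ?_⟩
  · rintro (⟨rfl, rfl⟩ | ⟨i, j, rfl, rfl, hij⟩)
    · exact σ.refl _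
    · exact hij
  rcases eq_or_ne a r with rfl | ha
  · exact Or.inl ⟨rfl, hσ b h⟩
  rcases eq_or_ne b r with rfl | hb
  · exact absurd (hσ a (σ.symm h)) ha
  obtain ⟨i, rfl⟩ := Fin.exists_succAbove_eq ha
  obtain ⟨j, rfl⟩ := Fin.exists_succAbove_eq hb
  exact Or.inr ⟨i, j, rfl, rfl, h⟩

theorem insertSingleton_mono : Monotone (insertSingleton (n := n) r) := by
  rintro s t hst a b (h | ⟨i, j, hi, hj, hij⟩)
  · exact Or.inl h
  · exact Or.inr ⟨i, j, hi, hj, hst hij⟩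

theorem insertSingleton_le_insertSingleton_iff {s t : Setoid (Fin n)} :
    insertSingleton r s ≤ insertSingleton r t ↔ s ≤ t := by
  refine ⟨fun h => ?_, fun h => insertSingleton_mono r h⟩
  rw [← comap_succAbove_insertSingleton r s, ← comap_succAbove_insertSingleton r t]
  exact fun i j hij => h hij

theorem isNoncrossing_insertSingleton_iff (s : Setoid (Fin n)) :
    IsNoncrossing (insertSingleton r s) ↔ IsNoncrossing s := by
  have hmono := Fin.strictMono_succAbove r
  simp only [IsNoncrossing]
  constructor
  · intro H i j k l hij hjk hkl hik hjl
    rw [← insertSingleton_rel_succAbove r] at hik hjl ⊢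
    exact H _ _ _ _ (hmono hij) (hmono hjk) (hmono hkl) hik hjl
  · intro H a b c d hab hbc hcd hac hbd
    rcases hac with ⟨rfl, rfl⟩ | ⟨i, k, rfl, rfl, hik⟩
    · exact absurd (hab.trans hbc) (lt_irrefl _)
    rcases hbd with ⟨rfl, rfl⟩ | ⟨j, l, rfl, rfl, hjl⟩
    · exact absurd (hbc.trans hcd) (lt_irrefl _)
    rw [Fin.succAbove_lt_succAbove_iff] at hab hbc hcd
    exact (insertSingleton_rel_succAbove r s i j).2 (H i j k l hab hbc hcd hik hjl)

theorem nonSingletons_insertSingleton (s : Setoid (Fin n)) :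
    nonSingletons (insertSingleton r s) = (nonSingletons s).image r.succAbove := by
  ext x
  simp only [nonSingletons, Finset.mem_filter, Finset.mem_univ, true_and, Finset.mem_image]
  constructor
  · rintro ⟨y, hy, ⟨rfl, rfl⟩ | ⟨i, j, rfl, rfl, hij⟩⟩
    · exact absurd rfl hy
    · exact ⟨i, ⟨j, fun hji => hy (congrArg r.succAbove hji), hij⟩, rfl⟩
  · rintro ⟨i, ⟨j, hji, hij⟩, rfl⟩
    exact ⟨r.succAbove j, (Fin.succAbove_right_injective).ne hji, Or.inr ⟨i, j, rfl, rfl, hij⟩⟩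

theorem card_nonSingletons_insertSingleton (s : Setoid (Fin n)) :
    (nonSingletons (insertSingleton r s)).card = (nonSingletons s).card := by
  rw [nonSingletons_insertSingleton, Finset.card_image_of_injective _ Fin.succAbove_right_injective]

theorem orderEmbOfFin_nonSingletons_insertSingleton (s : Setoid (Fin n))
    (i : Fin (nonSingletons (insertSingleton r s)).card) :
    (nonSingletons (insertSingleton r s)).orderEmbOfFin rfl i =
      r.succAbove ((nonSingletons s).orderEmbOfFin rfl
        (Fin.castOrderIso (card_nonSingletons_insertSingleton r s) i)) := by
  refine (congrFun (Finset.orderEmbOfFin_unique rfl (f := fun i => r.succAbove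
    ((nonSingletons s).orderEmbOfFin rfl (Fin.castOrderIso _ i))) (fun x => ?_) ?_) i).symm
  · have hmem := Finset.mem_image_of_mem r.succAbove
      (Finset.orderEmbOfFin_mem (nonSingletons s) rfl
        (Fin.castOrderIso (card_nonSingletons_insertSingleton r s) x))
    rwa [← nonSingletons_insertSingleton] at hmem
  · exact (Fin.strictMono_succAbove r).comp
      (((nonSingletons s).orderEmbOfFin rfl).strictMono.comp (Fin.castOrderIso _).strictMono)

theorem RS_insertSingleton (s : Setoid (Fin n)) :
    RS (insertSingleton r s) =
      (RS s).comap (Fin.castOrderIso (card_nonSingletons_insertSingleton r s)) := by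
  ext i j
  change (insertSingleton r s).r _ _ ↔ s.r _ _
  simp only [Finset.coe_orderIsoOfFin_apply, orderEmbOfFin_nonSingletons_insertSingleton,
    insertSingleton_rel_succAbove]

end SingletonInsertion

theorem IsIntervalSetoid.comap_orderIso {m k : ℕ} {t : Setoid (Fin k)} (ht : IsIntervalSetoid t)
    (e : Fin m ≃o Fin k) : IsIntervalSetoid (t.comap e) :=
  fun _ _ _ hab hbc hac => ht _ _ _ (e.monotone hab) (e.monotone hbc) hac

theorem isIntervalSetoid_comap_orderIso_iff {m k : ℕ} (t : Setoid (Fin k)) (e : Fin m ≃o Fin k) :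
    IsIntervalSetoid (t.comap e) ↔ IsIntervalSetoid t := by
  refine ⟨fun h => ?_, fun h => h.comap_orderIso e⟩
  have hsymm := h.comap_orderIso e.symm
  rwa [← Setoid.comap_comp, show ⇑e ∘ ⇑e.symm = id from e.self_comp_symm, Setoid.comap_id] at hsymm

theorem isAlmostInterval_insertSingleton_iff {n : ℕ} (r : Fin (n + 1)) (s : Setoid (Fin n)) :
    IsAlmostInterval (insertSingleton r s) ↔ IsAlmostInterval s := by
  rw [IsAlmostInterval, IsAlmostInterval, isNoncrossing_insertSingleton_iff, RS_insertSingleton,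
    isIntervalSetoid_comap_orderIso_iff]

theorem almostInterval_singletonInductive_general (n : ℕ) (r : Fin (n + 1)) :
    ∃ e : {s : Setoid (Fin n) // IsAlmostInterval s} ≃o
        {σ : Setoid (Fin (n + 1)) // IsAlmostInterval σ ∧ IsSingletonBlock r σ},
      ∀ π : {s : Setoid (Fin n) // IsAlmostInterval s},
        (e π).val = insertSingleton r π.val := by
  refine ⟨{
    toFun := fun s => ⟨insertSingleton r s,
      (isAlmostInterval_insertSingleton_iff r s).2 s.2, isSingletonBlock_insertSingleton r s⟩
    invFun := fun σ => ⟨σ.1.comap r.succAbove, by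
      rw [← isAlmostInterval_insertSingleton_iff r, insertSingleton_comap_succAbove r σ.2.2]
      exact σ.2.1⟩
    left_inv := fun s => Subtype.ext (comap_succAbove_insertSingleton r s)
    right_inv := fun σ => Subtype.ext (insertSingleton_comap_succAbove r σ.2.2)
    map_rel_iff' := insertSingleton_le_insertSingleton_iff r }, fun _ => rfl⟩

theorem almostInterval_singletonInductive (n : ℕ) (hn : 1 ≤ n) (r : Fin (n + 1)) :
    ∃ e : {s : Setoid (Fin n) // IsAlmostInterval s} ≃o
        {σ : Setoid (Fin (n + 1)) // IsAlmostInterval σ ∧ IsSingletonBlock r σ},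
      ∀ π : {s : Setoid (Fin n) // IsAlmostInterval s},
        (e π).val = insertSingleton r π.val :=
  almostInterval_singletonInductive_general n r
end
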